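/- arXiv:2010.14646 — 2 statements merged into one kernel-verified Lean document; each statement's English description precedes it below -/
import Mathlib

section
/- The function β ↦ 2β e^{β²} ∫_β^∞ e^{-z²} dz is strictly increasing on (0,∞). -/
/-!
The substitution `z = β + y / (2β)` turns `2β e^{β²} ∫_β^∞ e^{-z²} dz` into
`∫_0^∞ e^{-y²/(4β²) - y} dy`, whose integrand is strictly increasing in `β` for every `y > 0`.
-/

open MeasureTheory Real Set

theorem MeasureTheory.setIntegral_lt_setIntegral_of_forall_lt {X : Type*} [MeasurableSpace X]
    {μ : Measure X} {s : Set X} {f g : X → ℝ} (hs : MeasurableSet s) (hμs : μ s ≠ 0)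
    (hf : IntegrableOn f s μ) (hg : IntegrableOn g s μ) (hlt : ∀ x ∈ s, f x < g x) :
    ∫ x in s, f x ∂μ < ∫ x in s, g x ∂μ := by
  rw [← sub_pos, ← integral_sub hg hf]
  refine (setIntegral_pos_iff_support_of_nonneg_ae ?_ (hg.sub hf)).2 ?_
  · filter_upwards [ae_restrict_mem hs] with x hx using sub_nonneg.2 (hlt x hx).le
  · have hsupp : Function.support (g - f) ∩ s = s :=
      inter_eq_right.2 fun x hx => sub_ne_zero.2 (hlt x hx).ne'
    rwa [hsupp, pos_iff_ne_zero]

lemma image_const_add_mul_Ioi_zero {a b : ℝ} (hb : 0 < b) :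
    (fun y => a + b * y) '' Ioi 0 = Ioi a := by
  rw [← image_image (a + ·) (b * ·), image_mul_left_Ioi hb, image_const_add_Ioi, mul_zero,
    add_zero]

lemma two_mul_mul_exp_sq_mul_integral_Ioi_exp_neg_sq {β : ℝ} (hβ : 0 < β) :
    2 * β * exp (β ^ 2) * ∫ z in Ioi β, exp (-z ^ 2) =
      ∫ y in Ioi 0, exp (-y ^ 2 / (4 * β ^ 2) - y) := by
  have hsubst := integral_image_eq_integral_abs_deriv_smul (measurableSet_Ioi (a := 0))
    (fun y _ => ((hasDerivAt_id' y).const_mul (2 * β)⁻¹).const_add β |>.hasDerivWithinAt)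
    (fun y _ z _ h => by simpa [hβ.ne'] using h) (fun z => exp (-z ^ 2))
  rw [image_const_add_mul_Ioi_zero (by positivity)] at hsubst
  rw [hsubst, ← integral_const_mul]
  refine setIntegral_congr_fun measurableSet_Ioi fun y _ => ?_
  rw [smul_eq_mul, abs_of_pos (by positivity), mul_one, ← mul_assoc,
    mul_right_comm (2 * β), mul_inv_cancel₀ (by positivity), one_mul, ← exp_add]
  congr 1
  field_simp
  ring

lemma integrableOn_exp_neg_sq_div_sub (β : ℝ) :
    IntegrableOn (fun y => exp (-y ^ 2 / (4 * β ^ 2) - y)) (Ioi 0) := by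
  refine (exp_neg_integrableOn_Ioi 0 one_pos).mono' (by fun_prop) ?_
  filter_upwards [ae_restrict_mem measurableSet_Ioi] with y hy
  rw [norm_of_nonneg (exp_pos _).le, exp_le_exp, neg_one_mul, neg_div]
  have : 0 ≤ y ^ 2 / (4 * β ^ 2) := by positivity
  linarith

lemma exp_neg_sq_div_sub_strictMonoOn {y : ℝ} (hy : 0 < y) :
    StrictMonoOn (fun β => exp (-y ^ 2 / (4 * β ^ 2) - y)) (Ioi 0) := by
  intro a ha b _ hab
  simp only [exp_lt_exp, sub_lt_sub_iff_right, neg_div, neg_lt_neg_iff]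
  have ha : 0 < a := ha
  gcongr

theorem stmt_1 :
    StrictMonoOn (fun β : ℝ => 2 * β * Real.exp (β ^ 2) * ∫ z in Set.Ioi β, Real.exp (-z ^ 2))
      (Set.Ioi 0) := by
  intro a ha b hb hab
  simp only [two_mul_mul_exp_sq_mul_integral_Ioi_exp_neg_sq ha,
    two_mul_mul_exp_sq_mul_integral_Ioi_exp_neg_sq hb]
  exact setIntegral_lt_setIntegral_of_forall_lt measurableSet_Ioi (by simp)
    (integrableOn_exp_neg_sq_div_sub a) (integrableOn_exp_neg_sq_div_sub b)
    fun y hy => exp_neg_sq_div_sub_strictMonoOn hy ha hb hab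
end

section
/- For every β > 0, one has 0 < 2β e^{β²} ∫_β^∞ e^{-z²} dz < 1, and the function β ↦ 2β e^{β²} ∫_β^∞ e^{-z²} dz maps (0,∞) onto (0,1). -/
open MeasureTheory Real Set Filter Topology

/-!
Since `d/dz (-e^{-z²}/(2z)) = e^{-z²} (1 + 1/(2z²))`, for `β > 0` we get
`e^{-β²}/(2β) = G(β) + R(β)`, where `G(β) = ∫_β^∞ e^{-z²}` and
`0 < R(β) = ∫_β^∞ e^{-z²}/(2z²) ≤ G(β)/(2β²)`.
Hence `2β²/(2β²+1) ≤ 2β e^{β²} G(β) < 1`. The function is continuous on `[0, ∞)` and vanishes at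
`0`, so by the intermediate value theorem its image of `(0, ∞)` is all of `(0, 1)`.
-/

theorem setIntegral_Ioi_pos {f : ℝ → ℝ} {a : ℝ} (hf : IntegrableOn f (Ioi a))
    (hpos : ∀ x ∈ Ioi a, 0 < f x) : 0 < ∫ x in Ioi a, f x := by
  rw [setIntegral_pos_iff_support_of_nonneg_ae
    ((ae_restrict_mem measurableSet_Ioi).mono fun x hx => (hpos x hx).le) hf,
    inter_eq_right.2 fun x hx => Function.mem_support.2 (hpos x hx).ne']
  simp

lemma integrable_exp_neg_sq : Integrable fun z : ℝ => exp (-z ^ 2) := by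
  simpa using integrable_exp_neg_mul_sq one_pos

noncomputable def gaussianTail (β : ℝ) : ℝ := ∫ z in Ioi β, exp (-z ^ 2)

lemma gaussianTail_pos (β : ℝ) : 0 < gaussianTail β :=
  setIntegral_Ioi_pos integrable_exp_neg_sq.integrableOn fun _ _ => exp_pos _

lemma continuousOn_gaussianTail : ContinuousOn gaussianTail (Ici 0) :=
  integrable_exp_neg_sq.integrableOn.continuousOn_Ici_primitive_Ioi

lemma hasDerivAt_neg_exp_neg_sq_div {z : ℝ} (hz : z ≠ 0) :
    HasDerivAt (fun z => -exp (-z ^ 2) / (2 * z))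
      (exp (-z ^ 2) + exp (-z ^ 2) / (2 * z ^ 2)) z := by
  have h := (((hasDerivAt_pow 2 z).fun_neg.exp).fun_neg).div ((hasDerivAt_id' z).const_mul 2)
    (mul_ne_zero two_ne_zero hz)
  refine h.congr_deriv ?_
  field_simp
  ring

lemma tendsto_neg_exp_neg_sq_div : Tendsto (fun z : ℝ => -exp (-z ^ 2) / (2 * z)) atTop (𝓝 0) := by
  have hexp : Tendsto (fun z : ℝ => exp (-z ^ 2)) atTop (𝓝 0) :=
    tendsto_exp_atBot.comp (tendsto_neg_atTop_atBot.comp (tendsto_pow_atTop two_ne_zero))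
  have hinv : Tendsto (fun z : ℝ => (2 * z)⁻¹) atTop (𝓝 0) :=
    (tendsto_id.const_mul_atTop two_pos).inv_tendsto_atTop
  simpa [div_eq_mul_inv] using hexp.neg.mul hinv

lemma integrableOn_exp_neg_sq_div_sq {β : ℝ} (hβ : 0 < β) :
    IntegrableOn (fun z : ℝ => exp (-z ^ 2) / (2 * z ^ 2)) (Ioi β) := by
  refine (integrable_exp_neg_sq.integrableOn.div_const (2 * β ^ 2)).mono' ?_ ?_
  · exact (ContinuousOn.div (by fun_prop) (by fun_prop) fun z hz => by
      have : 0 < z := hβ.trans hz; positivity).aestronglyMeasurable measurableSet_Ioi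
  · filter_upwards [ae_restrict_mem measurableSet_Ioi] with z hz
    have hz : β < z := hz
    rw [Real.norm_of_nonneg (by positivity)]
    gcongr

lemma gaussianTail_add_integral_exp_neg_sq_div_sq {β : ℝ} (hβ : 0 < β) :
    gaussianTail β + ∫ z in Ioi β, exp (-z ^ 2) / (2 * z ^ 2) = exp (-β ^ 2) / (2 * β) := by
  rw [gaussianTail, ← integral_add integrable_exp_neg_sq.integrableOn
      (integrableOn_exp_neg_sq_div_sq hβ),
    integral_Ioi_of_hasDerivAt_of_tendsto'
      (fun z hz => hasDerivAt_neg_exp_neg_sq_div (hβ.trans_le hz).ne')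
      (integrable_exp_neg_sq.integrableOn.add (integrableOn_exp_neg_sq_div_sq hβ))
      tendsto_neg_exp_neg_sq_div]
  ring

lemma integral_exp_neg_sq_div_sq_le {β : ℝ} (hβ : 0 < β) :
    ∫ z in Ioi β, exp (-z ^ 2) / (2 * z ^ 2) ≤ gaussianTail β / (2 * β ^ 2) := by
  rw [gaussianTail, ← integral_div]
  refine setIntegral_mono_on (integrableOn_exp_neg_sq_div_sq hβ)
    (integrable_exp_neg_sq.integrableOn.div_const _) measurableSet_Ioi fun z hz => ?_
  have hz : β < z := hz
  gcongr

/-- `β_∞(β)` in the paper. -/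
noncomputable def tailRatio (β : ℝ) : ℝ := 2 * β * exp (β ^ 2) * gaussianTail β

lemma tailRatio_pos {β : ℝ} (hβ : 0 < β) : 0 < tailRatio β := by
  have := gaussianTail_pos β
  unfold tailRatio
  positivity

lemma one_sub_tailRatio {β : ℝ} (hβ : 0 < β) :
    1 - tailRatio β = 2 * β * exp (β ^ 2) * ∫ z in Ioi β, exp (-z ^ 2) / (2 * z ^ 2) := by
  have hunit : 2 * β * exp (β ^ 2) * (exp (-β ^ 2) / (2 * β)) = 1 := by
    rw [exp_neg]
    field_simp
  rw [tailRatio, ← hunit, ← gaussianTail_add_integral_exp_neg_sq_div_sq hβ]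
  ring

lemma tailRatio_lt_one {β : ℝ} (hβ : 0 < β) : tailRatio β < 1 := by
  have hR : 0 < ∫ z in Ioi β, exp (-z ^ 2) / (2 * z ^ 2) :=
    setIntegral_Ioi_pos (integrableOn_exp_neg_sq_div_sq hβ) fun z hz => by
      have : 0 < z := hβ.trans hz
      positivity
  rw [← sub_pos, one_sub_tailRatio hβ]
  positivity

lemma one_sub_inv_le_tailRatio {β : ℝ} (hβ : 0 < β) :
    1 - (2 * β ^ 2 + 1)⁻¹ ≤ tailRatio β := by
  have hle : 1 - tailRatio β ≤ tailRatio β / (2 * β ^ 2) := by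
    rw [one_sub_tailRatio hβ, tailRatio, mul_div_assoc]
    gcongr
    exact integral_exp_neg_sq_div_sq_le hβ
  rw [le_div_iff₀ (by positivity)] at hle
  rw [sub_le_comm, ← one_div, le_div_iff₀ (by positivity)]
  linear_combination hle

lemma continuousOn_tailRatio : ContinuousOn tailRatio (Ici 0) :=
  (by fun_prop : Continuous fun β : ℝ => 2 * β * exp (β ^ 2)).continuousOn.mul
    continuousOn_gaussianTail

lemma tendsto_tailRatio_nhdsGT_zero : Tendsto tailRatio (𝓝[>] 0) (𝓝 0) := by
  have h := (continuousOn_tailRatio 0 self_mem_Ici).mono Ioi_subset_Ici_self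
  simpa [tailRatio] using h.tendsto

lemma tendsto_tailRatio_atTop : Tendsto tailRatio atTop (𝓝 1) := by
  have hlow : Tendsto (fun β : ℝ => 1 - (2 * β ^ 2 + 1)⁻¹) atTop (𝓝 1) := by
    simpa using tendsto_const_nhds.sub (tendsto_atTop_add_const_right _ 1
      ((tendsto_pow_atTop (α := ℝ) two_ne_zero).const_mul_atTop two_pos)).inv_tendsto_atTop
  refine tendsto_of_tendsto_of_tendsto_of_le_of_le' hlow tendsto_const_nhds ?_ ?_
  · filter_upwards [eventually_gt_atTop 0] with β hβ using one_sub_inv_le_tailRatio hβ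
  · filter_upwards [eventually_gt_atTop 0] with β hβ using (tailRatio_lt_one hβ).le

theorem stmt_2 :
    (∀ β : ℝ, 0 < β →
      (fun β : ℝ => 2 * β * Real.exp (β ^ 2) * ∫ z in Set.Ioi β, Real.exp (-z ^ 2)) β ∈
        Set.Ioo (0 : ℝ) 1) ∧
    (fun β : ℝ => 2 * β * Real.exp (β ^ 2) * ∫ z in Set.Ioi β, Real.exp (-z ^ 2)) ''
        Set.Ioi 0 = Set.Ioo 0 1 := by
  change (∀ β : ℝ, 0 < β → tailRatio β ∈ Ioo 0 1) ∧ tailRatio '' Ioi 0 = Ioo 0 1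
  have hmaps : MapsTo tailRatio (Ioi 0) (Ioo 0 1) :=
    fun β hβ => ⟨tailRatio_pos hβ, tailRatio_lt_one hβ⟩
  refine ⟨hmaps, hmaps.image_subset.antisymm ?_⟩
  exact isPreconnected_Ioi.intermediate_value_Ioo (le_principal_iff.2 self_mem_nhdsWithin)
    (le_principal_iff.2 (Ioi_mem_atTop 0))
    (continuousOn_tailRatio.mono Ioi_subset_Ici_self) tendsto_tailRatio_nhdsGT_zero
    tendsto_tailRatio_atTop
end
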